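/- Let φ₂ be a complex polynomial of degree 3, φ₁ a non-constant entire function, α, β ∈ ℝ⁺ \ {1}, and Θₙ(x) = α^{φ₁(x)} (dⁿ/dxⁿ)(β^{−φ₂(x)}). Then y = Θₙ satisfies the third-order linear ODE: y‴ + [ (log β) φ₂′ − 3(log α) φ₁′ ] y″ + [ (n+2)(log β) φ₂″ − 3(log α) φ₁″ − 2(log α)(log β) φ₁′ φ₂′ + 3(log α)² (φ₁′)² ] y′ + [ −(log α)³ (φ₁′)³ + (log α)²(log β) φ₂′ (φ₁′)² + 3(log α)² φ₁′ φ₁″ − (log α) φ₁‴ − (log α)(log β) φ₁″ φ₂′ − (n+2)(log α)(log β) φ₂″ φ₁′ + ½(n+1)(n+2)(log β) φ₂‴ ] y = 0. -/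

import Mathlib

/-!
Put `g = exp (-φ₂ · log β)` and `u = exp (φ₁ · log α)`. Since `g' = -(log β) φ₂' g`, Leibniz' rule
applied to `g⁽ⁿ⁺³⁾ = (g')⁽ⁿ⁺²⁾` gives, because `φ₂⁗ = 0`, the three-term recurrence
`g⁽ⁿ⁺³⁾ = -(log β) (φ₂' g⁽ⁿ⁺²⁾ + (n+2) φ₂'' g⁽ⁿ⁺¹⁾ + C(n+2,2) φ₂''' g⁽ⁿ⁾)`, a third-order linear
ODE for `w = g⁽ⁿ⁾`. The derivatives of `u` are `u` times polynomials in `(log α) φ₁'`, `φ₁''`,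
`φ₁'''`, so Leibniz' rule for `Θₙ = u w` turns that ODE into the stated one.
-/

open Complex Polynomial
open scoped ContDiff

section

variable {𝕜 : Type*} [NontriviallyNormedField 𝕜]

theorem iteratedDeriv_iteratedDeriv {F : Type*} [NormedAddCommGroup F] [NormedSpace 𝕜 F]
    (k n : ℕ) (f : 𝕜 → F) : iteratedDeriv k (iteratedDeriv n f) = iteratedDeriv (n + k) f := by
  rw [add_comm]
  simp only [iteratedDeriv_eq_iterate, Function.iterate_add_apply]

theorem Polynomial.iteratedDeriv_eval (P : 𝕜[X]) (k : ℕ) :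
    iteratedDeriv k (fun x => P.eval x) = fun x => (derivative^[k] P).eval x := by
  induction k with
  | zero => simp
  | succ k ih =>
    ext x
    rw [iteratedDeriv_succ, ih, Polynomial.deriv, Function.iterate_succ_apply']

theorem Polynomial.iteratedDeriv_eval_eq_zero {P : 𝕜[X]} {k : ℕ} (hk : P.natDegree < k) :
    iteratedDeriv k (fun x => P.eval x) = 0 := by
  ext x
  simp [P.iteratedDeriv_eval, iterate_derivative_eq_zero hk]

theorem iteratedDeriv_const_mul_deriv (c : 𝕜) (f : 𝕜 → 𝕜) (k : ℕ) (x : 𝕜) :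
    iteratedDeriv k (fun x => c * deriv f x) x = c * iteratedDeriv (k + 1) f x := by
  rw [iteratedDeriv_const_mul_field, iteratedDeriv_succ']

variable {a u : 𝕜 → 𝕜} (ha : ContDiff 𝕜 ∞ a) (hu : ContDiff 𝕜 ∞ u) (hdu : deriv u = a * u)
include ha hu hdu

theorem iteratedDeriv_succ_of_deriv_eq_mul (k : ℕ) (x : 𝕜) :
    iteratedDeriv (k + 1) u x = ∑ i ∈ Finset.range (k + 1),
      k.choose i * iteratedDeriv i a x * iteratedDeriv (k - i) u x := by
  rw [iteratedDeriv_succ', hdu,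
    iteratedDeriv_mul (ha.contDiffAt.of_le ENat.LEInfty.out) (hu.contDiffAt.of_le ENat.LEInfty.out)]

theorem iteratedDeriv_two_of_deriv_eq_mul (x : 𝕜) :
    iteratedDeriv 2 u x = (deriv a x + a x ^ 2) * u x := by
  rw [iteratedDeriv_succ_of_deriv_eq_mul ha hu hdu]
  simp only [Finset.sum_range_succ, Finset.range_one, Finset.sum_singleton, Nat.choose_succ_self_right,
    zero_add, Nat.cast_one, iteratedDeriv_zero, one_mul, tsub_zero, iteratedDeriv_one, hdu,
    Pi.mul_apply, Nat.choose_self, tsub_self]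
  ring

theorem iteratedDeriv_three_of_deriv_eq_mul (x : 𝕜) :
    iteratedDeriv 3 u x = (iteratedDeriv 2 a x + 3 * a x * deriv a x + a x ^ 3) * u x := by
  rw [iteratedDeriv_succ_of_deriv_eq_mul ha hu hdu]
  simp only [Finset.sum_range_succ, Finset.range_one, Finset.sum_singleton, Nat.choose_zero_right,
    Nat.cast_one, iteratedDeriv_zero, one_mul, tsub_zero, iteratedDeriv_two_of_deriv_eq_mul ha hu hdu,
    Nat.choose_succ_self_right, iteratedDeriv_one, Nat.add_one_sub_one, hdu,
    Pi.mul_apply, Nat.choose_self, tsub_self]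
  ring

theorem iteratedDeriv_add_three_of_deriv_eq_mul (ha3 : iteratedDeriv 3 a = 0) (n : ℕ) (x : 𝕜) :
    iteratedDeriv (n + 3) u x = a x * iteratedDeriv (n + 2) u x
      + (n + 2) * deriv a x * iteratedDeriv (n + 1) u x
      + (n + 2).choose 2 * iteratedDeriv 2 a x * iteratedDeriv n u x := by
  rw [iteratedDeriv_succ_of_deriv_eq_mul ha hu hdu, Finset.sum_range_succ', Finset.sum_range_succ',
    Finset.sum_range_succ']
  have hvanish : ∀ i, iteratedDeriv (i + 1 + 1 + 1) a x = 0 := fun i => by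
    rw [show i + 1 + 1 + 1 = 3 + i by omega, ← iteratedDeriv_iteratedDeriv, ha3, iteratedDeriv_const_zero]
  simp only [hvanish, mul_zero, zero_mul, Finset.sum_const_zero, zero_add, add_tsub_cancel_right,
    Nat.choose_one_right, Nat.cast_add, Nat.cast_ofNat, iteratedDeriv_one, Nat.add_one_sub_one,
    Nat.choose_zero_right, Nat.cast_one, iteratedDeriv_zero, one_mul, tsub_zero]
  ring

end

section ComplexExp

theorem deriv_cexp_mul_const {f f' : ℂ → ℂ} (hf : ∀ z, HasDerivAt f (f' z) z) (c : ℂ) :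
    deriv (fun z => exp (f z * c)) = (fun z => c * f' z) * fun z => exp (f z * c) := by
  ext z
  rw [((hf z).mul_const c).cexp.deriv, Pi.mul_apply]
  ring

variable {φ w : ℂ → ℂ} (hφ : Differentiable ℂ φ) (c : ℂ)
include hφ

theorem contDiff_const_mul_deriv : ContDiff ℂ ∞ (fun z => c * deriv φ z) :=
  contDiff_const.mul (hφ.contDiff.iterate_deriv 1)

theorem iteratedDeriv_add_three_cexp_neg_mul (hφ4 : iteratedDeriv 4 φ = 0) (n : ℕ) (x : ℂ) :
    iteratedDeriv (n + 3) (fun z => exp (-φ z * c)) x =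
      -c * (deriv φ x * iteratedDeriv (n + 2) (fun z => exp (-φ z * c)) x
        + (n + 2) * iteratedDeriv 2 φ x * iteratedDeriv (n + 1) (fun z => exp (-φ z * c)) x
        + (n + 2) * (n + 1) / 2 * iteratedDeriv 3 φ x * iteratedDeriv n (fun z => exp (-φ z * c)) x) := by
  have hdg : deriv (fun z => exp (-φ z * c)) = (fun z => -c * deriv φ z) * fun z => exp (-φ z * c) := by
    rw [deriv_cexp_mul_const (fun z => (hφ z).hasDerivAt.fun_neg) c]
    congr 1
    ext z
    ring
  have ha3 : iteratedDeriv 3 (fun z => -c * deriv φ z) = 0 := by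
    ext z
    rw [iteratedDeriv_const_mul_deriv, hφ4, Pi.zero_apply, mul_zero]
  rw [iteratedDeriv_add_three_of_deriv_eq_mul (contDiff_const_mul_deriv hφ (-c))
    (hφ.fun_neg.mul_const c).cexp.contDiff hdg ha3, Nat.cast_choose_two,
    ← iteratedDeriv_one (f := fun z => -c * deriv φ z), iteratedDeriv_const_mul_deriv,
    iteratedDeriv_const_mul_deriv]
  push_cast
  ring

theorem iteratedDeriv_two_cexp_mul_const (x : ℂ) :
    iteratedDeriv 2 (fun z => exp (φ z * c)) x =
      (c * iteratedDeriv 2 φ x + (c * deriv φ x) ^ 2) * exp (φ x * c) := by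
  rw [iteratedDeriv_two_of_deriv_eq_mul (contDiff_const_mul_deriv hφ c)
    (hφ.mul_const c).cexp.contDiff (deriv_cexp_mul_const (fun z => (hφ z).hasDerivAt) c),
    ← iteratedDeriv_one (f := fun z => c * deriv φ z), iteratedDeriv_const_mul_deriv]

theorem iteratedDeriv_three_cexp_mul_const (x : ℂ) :
    iteratedDeriv 3 (fun z => exp (φ z * c)) x =
      (c * iteratedDeriv 3 φ x + 3 * c ^ 2 * deriv φ x * iteratedDeriv 2 φ x + (c * deriv φ x) ^ 3)
        * exp (φ x * c) := by
  rw [iteratedDeriv_three_of_deriv_eq_mul (contDiff_const_mul_deriv hφ c)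
    (hφ.mul_const c).cexp.contDiff (deriv_cexp_mul_const (fun z => (hφ z).hasDerivAt) c),
    ← iteratedDeriv_one (f := fun z => c * deriv φ z), iteratedDeriv_const_mul_deriv,
    iteratedDeriv_const_mul_deriv]
  ring

variable (hw : ContDiff ℂ ∞ w)
include hw

theorem deriv_cexp_mul_const_mul (x : ℂ) :
    deriv (fun z => exp (φ z * c) * w z) x =
      exp (φ x * c) * (deriv w x + c * deriv φ x * w x) := by
  rw [deriv_fun_mul ((hφ x).mul_const c).cexp (hw.differentiable (by simp) x),
    deriv_cexp_mul_const (fun z => (hφ z).hasDerivAt) c, Pi.mul_apply]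
  ring

theorem iteratedDeriv_two_cexp_mul_const_mul (x : ℂ) :
    iteratedDeriv 2 (fun z => exp (φ z * c) * w z) x =
      exp (φ x * c) * (iteratedDeriv 2 w x + 2 * c * deriv φ x * deriv w x
        + (c * iteratedDeriv 2 φ x + (c * deriv φ x) ^ 2) * w x) := by
  rw [iteratedDeriv_fun_mul ((hφ.mul_const c).cexp.contDiff.contDiffAt.of_le ENat.LEInfty.out)
    (hw.contDiffAt.of_le ENat.LEInfty.out)]
  simp only [Finset.sum_range_succ, Finset.range_one, Finset.sum_singleton, Nat.choose_zero_right,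
    Nat.cast_one, iteratedDeriv_zero, one_mul, tsub_zero, Nat.choose_succ_self_right,
    iteratedDeriv_one, deriv_cexp_mul_const (fun z => (hφ z).hasDerivAt) c, Pi.mul_apply,
    Nat.add_one_sub_one, Nat.choose_self, iteratedDeriv_two_cexp_mul_const hφ, tsub_self]
  ring

theorem iteratedDeriv_three_cexp_mul_const_mul (x : ℂ) :
    iteratedDeriv 3 (fun z => exp (φ z * c) * w z) x =
      exp (φ x * c) * (iteratedDeriv 3 w x + 3 * c * deriv φ x * iteratedDeriv 2 w x
        + 3 * (c * iteratedDeriv 2 φ x + (c * deriv φ x) ^ 2) * deriv w x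
        + (c * iteratedDeriv 3 φ x + 3 * c ^ 2 * deriv φ x * iteratedDeriv 2 φ x
          + (c * deriv φ x) ^ 3) * w x) := by
  rw [iteratedDeriv_fun_mul ((hφ.mul_const c).cexp.contDiff.contDiffAt.of_le ENat.LEInfty.out)
    (hw.contDiffAt.of_le ENat.LEInfty.out)]
  simp only [Finset.sum_range_succ, Finset.range_one, Finset.sum_singleton, Nat.choose_zero_right,
    Nat.cast_one, iteratedDeriv_zero, one_mul, tsub_zero, Nat.choose_one_right, Nat.cast_ofNat,
    iteratedDeriv_one, deriv_cexp_mul_const (fun z => (hφ z).hasDerivAt) c, Pi.mul_apply,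
    Nat.add_one_sub_one, Nat.choose_succ_self_right, iteratedDeriv_two_cexp_mul_const hφ,
    Nat.reduceSub, Nat.choose_self, iteratedDeriv_three_cexp_mul_const hφ, tsub_self]
  ring

end ComplexExp

theorem third_order_ode_general
    (α β : ℝ)
    (φ₁ φ₂ : ℂ → ℂ) (hφ₁ : Differentiable ℂ φ₁)
    (P : Polynomial ℂ) (hP : P.degree = 3) (hφ₂ : ∀ z, φ₂ z = P.eval z)
    (Θ : ℕ → ℂ → ℂ)
    (hΘ : ∀ n x, Θ n x = Complex.exp (φ₁ x * (Real.log α : ℂ)) *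
      iteratedDeriv n (fun z => Complex.exp (-(φ₂ z) * (Real.log β : ℂ))) x)
    (n : ℕ) (x : ℂ) :
    iteratedDeriv 3 (Θ n) x
      + ((Real.log β : ℂ) * deriv φ₂ x - 3 * (Real.log α : ℂ) * deriv φ₁ x) *
          iteratedDeriv 2 (Θ n) x
      + (((n : ℂ) + 2) * (Real.log β : ℂ) * iteratedDeriv 2 φ₂ x
          - 3 * (Real.log α : ℂ) * iteratedDeriv 2 φ₁ x
          - 2 * (Real.log α : ℂ) * (Real.log β : ℂ) * deriv φ₁ x * deriv φ₂ x
          + 3 * (Real.log α : ℂ) ^ 2 * (deriv φ₁ x) ^ 2) * deriv (Θ n) x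
      + (-(Real.log α : ℂ) ^ 3 * (deriv φ₁ x) ^ 3
          + (Real.log α : ℂ) ^ 2 * (Real.log β : ℂ) * deriv φ₂ x * (deriv φ₁ x) ^ 2
          + 3 * (Real.log α : ℂ) ^ 2 * deriv φ₁ x * iteratedDeriv 2 φ₁ x
          - (Real.log α : ℂ) * iteratedDeriv 3 φ₁ x
          - (Real.log α : ℂ) * (Real.log β : ℂ) * iteratedDeriv 2 φ₁ x * deriv φ₂ x
          - ((n : ℂ) + 2) * (Real.log α : ℂ) * (Real.log β : ℂ) *
              iteratedDeriv 2 φ₂ x * deriv φ₁ x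
          + (1 / 2 : ℂ) * ((n : ℂ) + 1) * ((n : ℂ) + 2) * (Real.log β : ℂ) *
              iteratedDeriv 3 φ₂ x) * Θ n x = 0 := by
  set L : ℂ := (Real.log α : ℂ)
  set M : ℂ := (Real.log β : ℂ)
  set g : ℂ → ℂ := fun z => exp (-φ₂ z * M)
  have hφ₂d : Differentiable ℂ φ₂ := by rw [funext hφ₂]; exact P.differentiable
  have hφ₂4 : iteratedDeriv 4 φ₂ = 0 := by
    rw [funext hφ₂]
    exact iteratedDeriv_eval_eq_zero (by rw [natDegree_eq_of_degree_eq_some hP]; norm_num)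
  have hw : ContDiff ℂ ∞ (iteratedDeriv n g) := by
    rw [iteratedDeriv_eq_iterate]
    exact (hφ₂d.fun_neg.mul_const M).cexp.contDiff.iterate_deriv n
  have hrec := iteratedDeriv_add_three_cexp_neg_mul hφ₂d M hφ₂4 n x
  rw [← iteratedDeriv_iteratedDeriv 3 n, ← iteratedDeriv_iteratedDeriv 2 n,
    ← iteratedDeriv_iteratedDeriv 1 n, iteratedDeriv_one] at hrec
  rw [show Θ n = fun z => exp (φ₁ z * L) * iteratedDeriv n g z from funext (hΘ n),
    iteratedDeriv_three_cexp_mul_const_mul hφ₁ L hw, iteratedDeriv_two_cexp_mul_const_mul hφ₁ L hw,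
    deriv_cexp_mul_const_mul hφ₁ L hw]
  linear_combination exp (φ₁ x * L) * hrec

theorem third_order_ode
    (α β : ℝ) (hα : 0 < α) (hα1 : α ≠ 1) (hβ : 0 < β) (hβ1 : β ≠ 1)
    (φ₁ φ₂ : ℂ → ℂ) (hφ₁ : Differentiable ℂ φ₁)
    (hφ₁nc : ¬ ∃ c : ℂ, ∀ x, φ₁ x = c)
    (P : Polynomial ℂ) (hP : P.degree = 3) (hφ₂ : ∀ z, φ₂ z = P.eval z)
    (Θ : ℕ → ℂ → ℂ)
    (hΘ : ∀ n x, Θ n x = Complex.exp (φ₁ x * (Real.log α : ℂ)) *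
      iteratedDeriv n (fun z => Complex.exp (-(φ₂ z) * (Real.log β : ℂ))) x)
    (n : ℕ) (x : ℂ) :
    iteratedDeriv 3 (Θ n) x
      + ((Real.log β : ℂ) * deriv φ₂ x - 3 * (Real.log α : ℂ) * deriv φ₁ x) *
          iteratedDeriv 2 (Θ n) x
      + (((n : ℂ) + 2) * (Real.log β : ℂ) * iteratedDeriv 2 φ₂ x
          - 3 * (Real.log α : ℂ) * iteratedDeriv 2 φ₁ x
          - 2 * (Real.log α : ℂ) * (Real.log β : ℂ) * deriv φ₁ x * deriv φ₂ x
          + 3 * (Real.log α : ℂ) ^ 2 * (deriv φ₁ x) ^ 2) * deriv (Θ n) x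
      + (-(Real.log α : ℂ) ^ 3 * (deriv φ₁ x) ^ 3
          + (Real.log α : ℂ) ^ 2 * (Real.log β : ℂ) * deriv φ₂ x * (deriv φ₁ x) ^ 2
          + 3 * (Real.log α : ℂ) ^ 2 * deriv φ₁ x * iteratedDeriv 2 φ₁ x
          - (Real.log α : ℂ) * iteratedDeriv 3 φ₁ x
          - (Real.log α : ℂ) * (Real.log β : ℂ) * iteratedDeriv 2 φ₁ x * deriv φ₂ x
          - ((n : ℂ) + 2) * (Real.log α : ℂ) * (Real.log β : ℂ) *
              iteratedDeriv 2 φ₂ x * deriv φ₁ x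
          + (1 / 2 : ℂ) * ((n : ℂ) + 1) * ((n : ℂ) + 2) * (Real.log β : ℂ) *
              iteratedDeriv 3 φ₂ x) * Θ n x = 0 :=
  third_order_ode_general α β φ₁ φ₂ hφ₁ P hP hφ₂ Θ hΘ n x
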